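/- arXiv:1705.02041 — 2 statements merged into one kernel-verified Lean document; each statement's English description precedes it below -/
import Mathlib

section
/- Let p ≠ 0, q > 0, ν ∈ ℝ with ν·q/p ≥ 0 (so the radicand is nonnegative). Set a = (1/2)·√2·√(1/q) and A = √(3·√2·√(1/q)·ν·q/p). Then U(ξ) = A·tanh(ξ) satisfies the ODE −ν·U + (1/3)·p·a·U³ − q·ν·a²·U'' = 0 for all ξ ∈ ℝ. -/
open Real

theorem Real.hasDerivAt_tanh (x : ℝ) : HasDerivAt tanh (1 - tanh x ^ 2) x := by
  have hcosh : cosh x ≠ 0 := (cosh_pos x).ne'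
  have hquot := (hasDerivAt_sinh x).div (hasDerivAt_cosh x) hcosh
  rw [show sinh / cosh = tanh from funext fun y => (tanh_eq_sinh_div_cosh y).symm] at hquot
  refine hquot.congr_deriv ?_
  rw [tanh_eq_sinh_div_cosh]
  field_simp

theorem iteratedDeriv_two_const_mul_tanh (A x : ℝ) :
    iteratedDeriv 2 (fun s => A * tanh s) x = -2 * A * tanh x * (1 - tanh x ^ 2) := by
  have hderiv : deriv (fun s => A * tanh s) = fun s => A * (1 - tanh s ^ 2) :=
    funext fun s => ((hasDerivAt_tanh s).const_mul A).deriv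
  rw [iteratedDeriv_succ, iteratedDeriv_one, hderiv]
  refine (((hasDerivAt_const x 1).sub ((hasDerivAt_tanh x).pow 2)).const_mul A).deriv.trans ?_
  push_cast
  ring

/-- Since `U'' = -2 A tanh ξ (1 - tanh² ξ)`, the two hypotheses make the coefficients of
`tanh ξ` and `tanh³ ξ` vanish separately. -/
theorem const_mul_tanh_solves_of_balance {p q ν a A : ℝ} (hqa : q * a ^ 2 = 1 / 2)
    (hpa : p * a * A ^ 2 = 3 * ν) (ξ : ℝ) :
    -ν * (A * tanh ξ) + (1/3) * p * a * (A * tanh ξ) ^ 3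
      - q * ν * a ^ 2 * iteratedDeriv 2 (fun s => A * tanh s) ξ = 0 := by
  rw [iteratedDeriv_two_const_mul_tanh]
  linear_combination (1/3 * A * tanh ξ ^ 3) * hpa + (2 * ν * A * tanh ξ * (1 - tanh ξ ^ 2)) * hqa

theorem fmEW_explicit_solution (p q ν : ℝ) (hp : p ≠ 0) (hq : 0 < q)
    (hrad : 0 ≤ ν * q / p) :
    let a := (1/2) * Real.sqrt 2 * Real.sqrt (1/q)
    let A := Real.sqrt (3 * Real.sqrt 2 * Real.sqrt (1/q) * ν * q / p)
    ∀ ξ : ℝ, -ν * (A * Real.tanh ξ) + (1/3) * p * a * (A * Real.tanh ξ)^3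
      - q * ν * a^2 * iteratedDeriv 2 (fun s => A * Real.tanh s) ξ = 0 := by
  intro a A
  have hsqrt2 : √2 ^ 2 = 2 := sq_sqrt zero_le_two
  have hsqrtq : √(1/q) ^ 2 = 1/q := sq_sqrt (by positivity)
  have hA : A ^ 2 = 3 * √2 * √(1/q) * ν * q / p := by
    refine sq_sqrt ?_
    rw [show 3 * √2 * √(1/q) * ν * q / p = 3 * √2 * √(1/q) * (ν * q / p) by ring]
    exact mul_nonneg (by positivity) hrad
  apply const_mul_tanh_solves_of_balance
  · calc q * a ^ 2 = q * (1/4) * √2 ^ 2 * √(1/q) ^ 2 := by ring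
      _ = 1/2 := by rw [hsqrt2, hsqrtq]; field_simp; ring
  · calc p * a * A ^ 2 = 3/2 * √2 ^ 2 * √(1/q) ^ 2 * ν * q * (p / p) := by rw [hA]; ring
      _ = 3 * ν := by rw [hsqrt2, hsqrtq, div_self hp]; field_simp
end

section
/- Let p, q, ν ∈ ℝ with q ≠ 0, p/q ≤ 0 and ν² + p/2 ≥ 0. Set A = √(−p/q) and a = √(ν² + p/2). Then U(ξ) = A·tanh(ξ) satisfies ν²·U''(ξ) − a²·U''(ξ) − p·U(ξ) − q·U(ξ)³ = 0 for all ξ ∈ ℝ. -/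
/-!
Since `tanh' = 1 - tanh ^ 2`, the function `tanh` is the kink of the φ⁴ equation,
`tanh'' = 2 tanh ^ 3 - 2 tanh`. In the reduced equation the coefficient of `U''` is
`ν ^ 2 - a ^ 2 = -p / 2`, and for `U = A tanh` with `q A ^ 2 = -p` the linear terms cancel
and the cubic ones combine to `-A tanh ^ 3 (p + q A ^ 2) = 0`.
-/

namespace Real

theorem hasDerivAt_tanh_s11 (x : ℝ) : HasDerivAt tanh (1 - tanh x ^ 2) x := by
  have h := (hasDerivAt_sinh x).div (hasDerivAt_cosh x) (cosh_pos x).ne'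
  rw [show sinh / cosh = tanh from funext fun y => (tanh_eq_sinh_div_cosh y).symm] at h
  refine h.congr_deriv ?_
  rw [tanh_eq_sinh_div_cosh]
  field_simp

theorem deriv_tanh : deriv tanh = fun x => 1 - tanh x ^ 2 :=
  funext fun x => (hasDerivAt_tanh_s11 x).deriv

theorem iteratedDeriv_two_tanh (x : ℝ) :
    iteratedDeriv 2 tanh x = 2 * tanh x ^ 3 - 2 * tanh x := by
  have h : HasDerivAt (fun y => 1 - tanh y ^ 2) (-(2 * tanh x * (1 - tanh x ^ 2))) x := by
    simpa using ((hasDerivAt_tanh_s11 x).pow 2).const_sub 1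
  rw [iteratedDeriv_succ, iteratedDeriv_one, deriv_tanh, h.deriv]
  ring

end Real

theorem fKG_tanh_solution (p q ν : ℝ) (hq : q ≠ 0) (hpq : p / q ≤ 0)
    (hν : 0 ≤ ν^2 + p/2) :
    let A := Real.sqrt (-p/q)
    let a := Real.sqrt (ν^2 + p/2)
    ∀ ξ : ℝ, ν^2 * iteratedDeriv 2 (fun s => A * Real.tanh s) ξ
      - a^2 * iteratedDeriv 2 (fun s => A * Real.tanh s) ξ
      - p * (A * Real.tanh ξ) - q * (A * Real.tanh ξ)^3 = 0 := by
  intro A a ξ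
  have ha : a ^ 2 = ν ^ 2 + p / 2 := Real.sq_sqrt hν
  have hA : q * A ^ 2 = -p := by
    rw [Real.sq_sqrt (by rw [neg_div]; linarith)]
    field_simp
  rw [iteratedDeriv_const_mul_field, Real.iteratedDeriv_two_tanh]
  linear_combination (A * (2 * Real.tanh ξ - 2 * Real.tanh ξ ^ 3)) * ha
    - A * Real.tanh ξ ^ 3 * hA
end
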